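/- arXiv:2601.16646 — 2 statements merged into one kernel-verified Lean document; each statement's English description precedes it below -/
import Mathlib

section
/- For nonnegative integers m and k with k ≤ m, the difference of products of binomial coefficients C(m,k)^2 − C(m,k−1)·C(m,k+1) equals the Narayana number N(m+1,k+1) = (1/(m+1))·C(m+1,k+1)·C(m+1,k). -/
/-!
Write `a = C(m,j)`, `b = C(m,j+1)`, `c = C(m,j+2)`. By Pascal's rule `C(m+1,j+1) = a + b` and
`C(m+1,j+2) = b + c`, and the ratio identities `(j+1) b = (m-j) a`, `(j+2) c = (m-j-1) b` (valid for
every `j`, both sides vanishing once `j > m`) express `b` and `c` through `a`. The identity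
`(m+1)(b² - ac) = (a+b)(b+c)` thereby becomes a rational identity in `a`, `m`, `j`.
-/

def intChoose (a : ℕ) (b : ℤ) : ℤ :=
  if 0 ≤ b ∧ b ≤ (a : ℤ) then (a.choose b.toNat : ℤ) else 0

theorem intChoose_natCast (a b : ℕ) : intChoose a b = a.choose b := by
  by_cases h : b ≤ a
  · simp [intChoose, h]
  · simp [intChoose, h, Nat.choose_eq_zero_of_lt (not_le.mp h)]

theorem Nat.cast_choose_succ_mul {R : Type*} [CommRing R] (n k : ℕ) :
    (n.choose (k + 1) : R) * (k + 1) = n.choose k * (n - k) := by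
  rcases le_or_gt k n with hkn | hnk
  · simpa [Nat.cast_sub hkn] using congrArg (Nat.cast : ℕ → R) (Nat.choose_succ_right_eq n k)
  · simp [Nat.choose_eq_zero_of_lt hnk, Nat.choose_eq_zero_of_lt (hnk.trans k.lt_succ_self)]

theorem succ_mul_choose_sq_sub {K : Type*} [Field K] [CharZero K] (m j : ℕ) :
    (m + 1 : K) * ((m.choose (j + 1) : K) ^ 2 - m.choose j * m.choose (j + 2)) =
      (m + 1).choose (j + 2) * (m + 1).choose (j + 1) := by
  have hb := Nat.cast_choose_succ_mul (R := K) m j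
  have hc := Nat.cast_choose_succ_mul (R := K) m (j + 1)
  rw [Nat.choose_succ_succ' m (j + 1), Nat.choose_succ_succ' m j]
  push_cast at hb hc ⊢
  have hj1 : (j + 1 : K) ≠ 0 := by exact_mod_cast j.succ_ne_zero
  have hj2 : (j + 1 + 1 : K) ≠ 0 := by exact_mod_cast (j + 1).succ_ne_zero
  rw [← eq_div_iff hj1] at hb
  rw [← eq_div_iff hj2] at hc
  rw [hc, hb]
  field_simp
  ring

theorem narayana_as_binomial_difference_general (m k : ℕ) :
    ((intChoose m k : ℚ)) ^ 2
      - (intChoose m ((k : ℤ) - 1) : ℚ) * (intChoose m ((k : ℤ) + 1) : ℚ)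
    = (1 / (m + 1 : ℚ)) * ((m + 1).choose (k + 1) : ℚ) * ((m + 1).choose k : ℚ) := by
  rw [mul_assoc, one_div, eq_inv_mul_iff_mul_eq₀ (by positivity)]
  rcases k with _ | j
  · simp [intChoose]
  · have hprev : ((j + 1 : ℕ) : ℤ) - 1 = j := by push_cast; ring
    have hnext : ((j + 1 : ℕ) : ℤ) + 1 = (j + 2 : ℕ) := by push_cast; ring
    rw [hprev, hnext, intChoose_natCast, intChoose_natCast, intChoose_natCast]
    push_cast
    rw [succ_mul_choose_sq_sub, mul_comm]

/-- For `k ≤ m`, `C(m,k)^2 − C(m,k−1)·C(m,k+1) = (1/(m+1))·C(m+1,k+1)·C(m+1,k)`,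
the Narayana number `N(m+1,k+1)`. -/
theorem narayana_as_binomial_difference (m k : ℕ) (hk : k ≤ m) :
    ((intChoose m k : ℚ)) ^ 2
      - (intChoose m ((k : ℤ) - 1) : ℚ) * (intChoose m ((k : ℤ) + 1) : ℚ)
    = (1 / (m + 1 : ℚ)) * ((m + 1).choose (k + 1) : ℚ) * ((m + 1).choose k : ℚ) :=
  narayana_as_binomial_difference_general m k
end

section
/- For nonnegative integers m, k with 2k+1 ≤ 2m, the telescoping identity holds: ∑_{j=0}^{k} (2j+2)·[C(m,k−j)·C(m,k+j+1) − C(m,k−j−1)·C(m,k+j+2)] = C(2m, 2k+1), i.e., the dimensions of the half-integer irreducible components sum to the dimension of ⋀^{2k+1}ℂ^{2m}. -/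
/-!
Write `f j = C(m, k-j) C(m, k+j+1)`, so that the multiplicity of `V_{j+1/2}` is `f j - f (j+1)`.
Summation by parts turns the weighted sum into `2 ∑_{j ≤ k} f j`, as `f (k+1) = 0`. The terms
`f j` are the products `C(m,i) C(m,2k+1-i)` with `i ≤ k`, i.e. half of the (symmetric)
Vandermonde convolution for `C(2m, 2k+1)`.
-/

open Finset

lemma intChoose_of_nonneg (a : ℕ) {b : ℤ} (hb : 0 ≤ b) :
    intChoose a b = (a.choose b.toNat : ℤ) := by
  unfold intChoose
  by_cases hba : b ≤ (a : ℤ)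
  · simp [hb, hba]
  · rw [if_neg (by tauto), Nat.choose_eq_zero_of_lt (by omega), Nat.cast_zero]

lemma intChoose_of_neg (a : ℕ) {b : ℤ} (hb : b < 0) : intChoose a b = 0 :=
  if_neg fun h => absurd h.1 (not_le.2 hb)

lemma sum_range_succ_mul_sub_succ {R : Type*} [CommRing R] (f : ℕ → R) (n : ℕ) :
    ∑ j ∈ range n, ((j : R) + 1) * (f j - f (j + 1)) = ∑ j ∈ range n, f j - n * f n := by
  induction n with
  | zero => simp
  | succ n ih =>
    rw [sum_range_succ, ih, sum_range_succ]
    push_cast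
    ring

lemma sum_range_two_mul {M : Type*} [AddCommMonoid M] (g : ℕ → M) (n : ℕ) :
    ∑ i ∈ range (2 * n), g i = ∑ i ∈ range n, (g i + g (2 * n - 1 - i)) := by
  rw [two_mul, sum_range_add, sum_add_distrib, ← sum_range_reflect (fun i => g (n + i))]
  refine congrArg _ (sum_congr rfl fun i hi => congrArg g ?_)
  have := mem_range.1 hi
  omega

lemma two_mul_sum_range_choose_mul_choose (m k : ℕ) :
    2 * ∑ i ∈ range (k + 1), m.choose i * m.choose (2 * k + 1 - i)
      = (2 * m).choose (2 * k + 1) := by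
  rw [two_mul m, Nat.add_choose_eq, Nat.sum_antidiagonal_eq_sum_range_succ_mk,
    show (2 * k + 1).succ = 2 * (k + 1) by omega, sum_range_two_mul, mul_sum]
  refine sum_congr rfl fun i hi => ?_
  have := mem_range.1 hi
  rw [show 2 * k + 1 - (2 * (k + 1) - 1 - i) = i by omega,
    show 2 * (k + 1) - 1 - i = 2 * k + 1 - i by omega, mul_comm (m.choose (2 * k + 1 - i))]
  ring

lemma sum_range_intChoose_mul_intChoose (m k : ℕ) :
    ∑ j ∈ range (k + 1), intChoose m ((k : ℤ) - j) * intChoose m ((k : ℤ) + j + 1)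
      = ∑ i ∈ range (k + 1), (m.choose i * m.choose (2 * k + 1 - i) : ℤ) := by
  rw [← sum_range_reflect]
  refine sum_congr rfl fun j hj => ?_
  have := mem_range.1 hj
  rw [intChoose_of_nonneg m (by omega), intChoose_of_nonneg m (by omega)]
  congr 3 <;> omega

theorem dim_sum_half_integer_components_general (m k : ℕ) :
    ∑ j ∈ Finset.range (k + 1),
        (2 * (j : ℤ) + 2) *
          (intChoose m ((k : ℤ) - j) * intChoose m ((k : ℤ) + j + 1)
            - intChoose m ((k : ℤ) - j - 1) * intChoose m ((k : ℤ) + j + 2))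
      = ((2 * m).choose (2 * k + 1) : ℤ) := by
  set f : ℕ → ℤ := fun j => intChoose m ((k : ℤ) - j) * intChoose m ((k : ℤ) + j + 1)
  have hf_last : f (k + 1) = 0 := by
    simp only [f, intChoose_of_neg m (by omega : (k : ℤ) - ↑(k + 1) < 0), zero_mul]
  calc _ = 2 * ∑ j ∈ range (k + 1), ((j : ℤ) + 1) * (f j - f (j + 1)) := by
          rw [mul_sum]
          refine sum_congr rfl fun j _ => ?_
          simp only [f]
          push_cast
          ring_nf
    _ = 2 * ∑ j ∈ range (k + 1), f j := by
          rw [sum_range_succ_mul_sub_succ, hf_last, mul_zero, sub_zero]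
    _ = _ := by
          rw [sum_range_intChoose_mul_intChoose, ← two_mul_sum_range_choose_mul_choose]
          push_cast
          rfl

/-- The dimensions of the half-integer irreducible components of
`⋀^{2k+1}(ℂ^m ⊗ ℂ²)` sum to the total dimension `C(2m, 2k+1)`:
`∑_{j=0}^{k} (2j+2)·[C(m,k−j)·C(m,k+j+1) − C(m,k−j−1)·C(m,k+j+2)] = C(2m,2k+1)`. -/
theorem dim_sum_half_integer_components (m k : ℕ) (h : 2 * k + 1 ≤ 2 * m) :
    ∑ j ∈ Finset.range (k + 1),
        (2 * (j : ℤ) + 2) *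
          (intChoose m ((k : ℤ) - j) * intChoose m ((k : ℤ) + j + 1)
            - intChoose m ((k : ℤ) - j - 1) * intChoose m ((k : ℤ) + j + 2))
      = ((2 * m).choose (2 * k + 1) : ℤ) :=
  dim_sum_half_integer_components_general m k
end
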